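/- Let G be a finite group. If {x_1, x_2, …, x_t} is a maximal clique of the reduced graph ℛ_{𝒫_E(G)} of the enhanced power graph of G, then ⋃_{i=1}^{t} x̄_i is a maximal cyclic subgroup of G, where x̄_i is the ≡-class of x_i. -/

import Mathlib

/-- The closed neighborhood of a vertex `x` in a simple graph. -/
def closedNbhd {V : Type*} (Γ : SimpleGraph V) (x : V) : Set V :=
  insert x (Γ.neighborSet x)

/-- `z` strongly resolves `x` and `y` if some shortest path from `z` to `x`
contains `y`, or some shortest path from `z` to `y` contains `x`. -/
def StronglyResolves {V : Type*} (Γ : SimpleGraph V) (z x y : V) : Prop :=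
  (∃ w : Γ.Walk z x, w.IsPath ∧ w.length = Γ.dist z x ∧ y ∈ w.support) ∨
  (∃ w : Γ.Walk z y, w.IsPath ∧ w.length = Γ.dist z y ∧ x ∈ w.support)

/-- `S` is a strong resolving set if every pair of distinct vertices is
strongly resolved by some vertex of `S`. -/
def IsStrongResolvingSet {V : Type*} (Γ : SimpleGraph V) (S : Set V) : Prop :=
  ∀ x y : V, x ≠ y → ∃ z ∈ S, StronglyResolves Γ z x y

/-- The strong metric dimension: the minimum size of a strong resolving set. -/
noncomputable def sdim {V : Type*} [Fintype V] (Γ : SimpleGraph V) : ℕ :=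
  sInf {k | ∃ S : Finset V, S.card = k ∧ IsStrongResolvingSet Γ ↑S}

/-- The equivalence relation `x ≈ y` iff `N[x] = N[y]`. -/
def nbhdSetoid {V : Type*} (Γ : SimpleGraph V) : Setoid V :=
  ⟨fun x y => closedNbhd Γ x = closedNbhd Γ y,
   ⟨fun _ => rfl, Eq.symm, Eq.trans⟩⟩

/-- The reduced graph `ℛ_Γ`: vertices are the `≈`-classes, two distinct classes
being adjacent iff some (equivalently, any) pair of their members is adjacent in `Γ`. -/
def reducedGraph {V : Type*} (Γ : SimpleGraph V) :
    SimpleGraph (Quotient (nbhdSetoid Γ)) where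
  Adj a b := a ≠ b ∧ ∃ x y : V,
    Quotient.mk (nbhdSetoid Γ) x = a ∧ Quotient.mk (nbhdSetoid Γ) y = b ∧ Γ.Adj x y
  symm := ⟨by rintro a b ⟨h, x, y, hx, hy, hadj⟩; exact ⟨h.symm, y, x, hy, hx, hadj.symm⟩⟩
  loopless := ⟨by rintro a ⟨h, -⟩; exact h rfl⟩

/-- The order supergraph `𝒮(G)`: distinct `x, y` are adjacent iff
`o(x) ∣ o(y)` or `o(y) ∣ o(x)`. -/
def orderSupergraph (G : Type*) [Group G] : SimpleGraph G where
  Adj x y := x ≠ y ∧ (orderOf x ∣ orderOf y ∨ orderOf y ∣ orderOf x)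
  symm := ⟨by rintro x y ⟨h, h2⟩; exact ⟨h.symm, h2.symm⟩⟩
  loopless := ⟨by rintro x ⟨h, -⟩; exact h rfl⟩

/-- The enhanced power graph `𝒫_E(G)`: distinct `x, y` are adjacent iff
`⟨x, y⟩` is cyclic. -/
def enhancedPowerGraph (G : Type*) [Group G] : SimpleGraph G where
  Adj x y := x ≠ y ∧ IsCyclic (Subgroup.closure ({x, y} : Set G))
  symm := ⟨by rintro x y ⟨h, h2⟩; rw [Set.pair_comm] at h2; exact ⟨h.symm, h2⟩⟩
  loopless := ⟨by rintro x ⟨h, -⟩; exact h rfl⟩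

/-- The reduced power graph `𝒫_R(G)`: distinct `x, y` are adjacent iff
`⟨x⟩ ⊂ ⟨y⟩` or `⟨y⟩ ⊂ ⟨x⟩`. -/
def reducedPowerGraph (G : Type*) [Group G] : SimpleGraph G where
  Adj x y := Subgroup.zpowers x < Subgroup.zpowers y ∨ Subgroup.zpowers y < Subgroup.zpowers x
  symm := ⟨by rintro x y h; exact Or.symm h⟩
  loopless := ⟨by rintro x h; rcases h with h | h <;> exact lt_irrefl _ h⟩

/-- `Ω n`: the number of prime factors of `n` counted with multiplicity. -/
def bigOmega (n : ℕ) : ℕ := n.primeFactorsList.length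

/-- A maximal cyclic subgroup: a cyclic subgroup not properly contained in any
cyclic subgroup. -/
def IsMaxCyclic {G : Type*} [Group G] (M : Subgroup G) : Prop :=
  IsCyclic M ∧ ∀ N : Subgroup G, IsCyclic N → M ≤ N → M = N

/-- `ℳ_g`: the set of maximal cyclic subgroups containing `g`. -/
def maxCyclicOn {G : Type*} [Group G] (g : G) : Set (Subgroup G) :=
  {M | IsMaxCyclic M ∧ g ∈ M}

/-! The union `U` of the classes of a clique of the reduced graph is again a clique of `𝒫_E(G)`:
if `N[z] = N[x]`, `N[w] = N[y]` and `x, y` are equal or adjacent, then `w ∈ N[z]`. Elements of `U`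
generate pairwise cyclic subgroups, so `⟨U⟩` is abelian, and it is cyclic because its Sylow
subgroups are: with `m` the `p'`-part of `|G|`, the Sylow `p`-subgroup of `⟨U⟩` consists of
`m`-th powers, and the `p`-elements `u ^ m` (`u ∈ U`) all lie in the cyclic group generated by
the one of largest order. Take a maximal cyclic `M ≥ ⟨U⟩`. An element of `M` outside `U` would
be adjacent to the whole clique without sharing the closed neighbourhood of any of its members,
contradicting maximality of the clique. -/

section ClosedNbhd

variable {V : Type*} (Γ : SimpleGraph V)

lemma mem_closedNbhd_iff {x z : V} : z ∈ closedNbhd Γ x ↔ z = x ∨ Γ.Adj x z := by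
  simp [closedNbhd]

lemma mem_closedNbhd_comm {x y : V} : x ∈ closedNbhd Γ y ↔ y ∈ closedNbhd Γ x := by
  simp only [mem_closedNbhd_iff, eq_comm, Γ.adj_comm]

variable {Γ}

lemma SimpleGraph.IsClique.iUnion_closedNbhd_eq {S : Set V} (hS : Γ.IsClique S) :
    Γ.IsClique (⋃ x ∈ S, {z | closedNbhd Γ z = closedNbhd Γ x}) := by
  intro z hz w hw hzw
  simp only [Set.mem_iUnion, Set.mem_ofPred_eq, exists_prop] at hz hw
  obtain ⟨x, hx, hzx⟩ := hz
  obtain ⟨y, hy, hwy⟩ := hw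
  have hxy : x ∈ closedNbhd Γ y := by
    rcases eq_or_ne x y with rfl | hne
    · exact Set.mem_insert x _
    · exact (mem_closedNbhd_iff Γ).2 (Or.inr (hS hx hy hne).symm)
  have hwz : w ∈ closedNbhd Γ z := by
    rwa [hzx, mem_closedNbhd_comm, hwy]
  exact ((mem_closedNbhd_iff Γ).1 hwz).resolve_left hzw.symm

end ClosedNbhd

open Subgroup

section CyclicClosure

variable {G : Type*} [Group G]

lemma mem_zpowers_of_orderOf_dvd [Finite G] {x y : G} (hxy : IsCyclic (closure {x, y}))
    (h : orderOf x ∣ orderOf y) : x ∈ zpowers y := by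
  classical
  -- In the cyclic group `C`, the `orderOf y` powers of `y` exhaust the at most `orderOf y`
  -- solutions of `a ^ orderOf y = 1`.
  let C := closure ({x, y} : Set G)
  have : Fintype C := Fintype.ofFinite C
  let X : C := ⟨x, subset_closure (by simp)⟩
  let Y : C := ⟨y, subset_closure (by simp)⟩
  let roots : Finset C := {a | a ^ orderOf y = 1}
  have hY : orderOf Y = orderOf y := Subgroup.orderOf_mk y _
  have hsub : (zpowers Y : Set C).toFinset ⊆ roots := by
    intro a ha
    obtain ⟨k, rfl⟩ := mem_zpowers_iff.1 (Set.mem_toFinset.1 ha)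
    simp only [roots, Finset.mem_filter, Finset.mem_univ, true_and, ← hY]
    rw [← zpow_natCast, ← zpow_mul, mul_comm, zpow_mul, zpow_natCast, pow_orderOf_eq_one,
      one_zpow]
  have heq : (zpowers Y : Set C).toFinset = roots :=
    Finset.eq_of_subset_of_card_le hsub (by
      rw [Set.toFinset_card, ← Nat.card_eq_fintype_card, SetLike.coe_sort_coe, Nat.card_zpowers,
        hY]
      exact IsCyclic.card_pow_eq_one_le (orderOf_pos y))
  have hX : X ∈ roots := by
    simpa [roots] using orderOf_dvd_iff_pow_eq_one.1 ((Subgroup.orderOf_mk x _).symm ▸ h)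
  obtain ⟨k, hk⟩ := mem_zpowers_iff.1 (by simpa [← heq] using hX)
  exact ⟨k, congrArg Subtype.val hk⟩

lemma commute_of_isCyclic_closure_pair {x y : G} (h : IsCyclic (closure {x, y})) :
    Commute x y :=
  congrArg Subtype.val (mul_comm' (⟨x, subset_closure (by simp)⟩ : closure {x, y})
    ⟨y, subset_closure (by simp)⟩)

lemma isCyclic_closure_pair_pow {x y : G} (h : IsCyclic (closure {x, y})) (m : ℕ) :
    IsCyclic (closure {x ^ m, y ^ m}) := by
  refine isCyclic_of_le (H' := closure {x, y}) ((closure_le _).2 (Set.pair_subset ?_ ?_)) <;>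
    exact pow_mem (subset_closure (by simp)) m

lemma exists_subset_zpowers_of_orderOf_eq_pow [Finite G] {p : ℕ} (hp : 1 < p) {S : Set G}
    (hS : ∀ x ∈ S, ∀ y ∈ S, IsCyclic (closure {x, y}))
    (hord : ∀ x ∈ S, ∃ k, orderOf x = p ^ k) :
    ∃ b : G, S ⊆ zpowers b := by
  rcases S.eq_empty_or_nonempty with rfl | hne
  · exact ⟨1, Set.empty_subset _⟩
  obtain ⟨b, hb, hmax⟩ := S.exists_max_image orderOf S.toFinite hne
  refine ⟨b, fun x hx ↦ mem_zpowers_of_orderOf_dvd (hS x hx b hb) ?_⟩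
  obtain ⟨i, hi⟩ := hord x hx
  obtain ⟨j, hj⟩ := hord b hb
  have hle := hmax x hx
  rw [hi, hj] at hle ⊢
  exact pow_dvd_pow p ((Nat.pow_le_pow_iff_right hp).1 hle)

lemma pow_mem_of_mem_closure {T : Set G} (hT : ∀ x ∈ T, ∀ y ∈ T, Commute x y)
    {K : Subgroup G} {m : ℕ} (hTK : ∀ t ∈ T, t ^ m ∈ K) {y : G} (hy : y ∈ closure T) :
    y ^ m ∈ K := by
  have hcomm : ∀ a ∈ closure T, ∀ b ∈ closure T, Commute a b := by
    have := isMulCommutative_closure fun x hx y hy ↦ (hT x hx y hy).eq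
    exact fun a ha b hb ↦ congrArg Subtype.val (mul_comm' (⟨a, ha⟩ : closure T) ⟨b, hb⟩)
  induction hy using closure_induction with
  | mem t ht => exact hTK t ht
  | one => simp
  | mul a b ha hb hak hbk => rw [(hcomm a ha b hb).mul_pow]; exact mul_mem hak hbk
  | inv a _ hak => rw [inv_pow]; exact inv_mem hak

lemma isCyclic_sylow_closure [Finite G] {T : Set G}
    (hT : ∀ x ∈ T, ∀ y ∈ T, IsCyclic (closure {x, y})) {p : ℕ} (hp : p.Prime)
    (P : Sylow p (closure T)) : IsCyclic P := by
  set n := Nat.card G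
  set m := ordCompl[p] n
  have hcop : p.Coprime m := Nat.coprime_ordCompl hp Nat.card_pos.ne'
  have hord : ∀ g : G, ∃ k, orderOf (g ^ m) = p ^ k := by
    intro g
    have : orderOf (g ^ m) ∣ p ^ n.factorization p := by
      rw [orderOf_dvd_iff_pow_eq_one, ← pow_mul, mul_comm, Nat.ordProj_mul_ordCompl_eq_self]
      exact pow_card_eq_one'
    obtain ⟨k, -, hk⟩ := (Nat.dvd_prime_pow hp).1 this
    exact ⟨k, hk⟩
  obtain ⟨b, hb⟩ := exists_subset_zpowers_of_orderOf_eq_pow hp.one_lt (S := (· ^ m) '' T)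
    (by
      rintro _ ⟨x, hx, rfl⟩ _ ⟨y, hy, rfl⟩
      exact isCyclic_closure_pair_pow (hT x hx y hy) m)
    (by rintro _ ⟨x, -, rfl⟩; exact hord x)
  have hpow : ∀ y ∈ closure T, y ^ m ∈ zpowers b :=
    fun _ ↦ pow_mem_of_mem_closure
      (fun x hx y hy ↦ commute_of_isCyclic_closure_pair (hT x hx y hy))
      fun t ht ↦ hb ⟨t, ht, rfl⟩
  -- `m` is prime to `p`, so every element of the `p`-group `P` is an `m`-th power in `P`.
  have hle : (P : Subgroup (closure T)).map (closure T).subtype ≤ zpowers b := by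
    rintro _ ⟨x, hx, rfl⟩
    obtain ⟨y, hy⟩ := (P.isPGroup'.powEquiv hcop).surjective ⟨x, hx⟩
    have hyx : ((y : closure T) : G) ^ m = x := by
      simpa using congrArg (fun z : P ↦ ((z : closure T) : G)) hy
    change (x : G) ∈ zpowers b
    exact hyx ▸ hpow _ (y : closure T).2
  have := isCyclic_of_le hle
  exact (equivMapOfInjective _ _ (closure T).subtype_injective).isCyclic.2 this

open scoped IsMulCommutative in
theorem isCyclic_closure_of_forall_isCyclic_closure_pair [Finite G] {T : Set G}
    (hT : ∀ x ∈ T, ∀ y ∈ T, IsCyclic (closure {x, y})) : IsCyclic (closure T) := by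
  have := isMulCommutative_closure fun x hx y hy ↦
    (commute_of_isCyclic_closure_pair (hT x hx y hy)).eq
  have : IsZGroup (closure T) := ⟨fun _ hp P ↦ isCyclic_sylow_closure hT hp P⟩
  infer_instance

lemma exists_isMaxCyclic_le [Finite G] {H : Subgroup G} (hH : IsCyclic H) :
    ∃ M : Subgroup G, IsMaxCyclic M ∧ H ≤ M := by
  obtain ⟨M, hHM, hM⟩ := Finite.exists_le_maximal (p := fun K : Subgroup G ↦ IsCyclic K) hH
  exact ⟨M, ⟨hM.prop, fun N hN hMN ↦ le_antisymm hMN (hM.2 hN hMN)⟩, hHM⟩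

lemma isCyclic_closure_pair_of_isClique {T : Set G} (hT : (enhancedPowerGraph G).IsClique T)
    {x y : G} (hx : x ∈ T) (hy : y ∈ T) : IsCyclic (closure {x, y}) := by
  rcases eq_or_ne x y with rfl | hne
  · rw [Set.pair_eq_singleton, ← zpowers_eq_closure]
    infer_instance
  · exact (hT hx hy hne).2

lemma enhancedPowerGraph_adj_of_mem {K : Subgroup G} [IsCyclic K] {x y : G} (hx : x ∈ K)
    (hy : y ∈ K) (hne : x ≠ y) : (enhancedPowerGraph G).Adj x y :=
  ⟨hne, isCyclic_of_le ((closure_le K).2 (Set.pair_subset hx hy))⟩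

end CyclicClosure

theorem union_equivClasses_maximal_reduced_clique_general (G : Type*) [Group G] [Fintype G]
    (S : Finset G)
    (hadj : ∀ x ∈ S, ∀ y ∈ S, x ≠ y → (enhancedPowerGraph G).Adj x y)
    (hmax : ¬∃ z : G,
      (∀ x ∈ S, closedNbhd (enhancedPowerGraph G) z ≠ closedNbhd (enhancedPowerGraph G) x) ∧
      ∀ x ∈ S, (enhancedPowerGraph G).Adj z x) :
    ∃ M : Subgroup G, IsMaxCyclic M ∧
      (⋃ x ∈ (S : Set G),
        {z : G | closedNbhd (enhancedPowerGraph G) z = closedNbhd (enhancedPowerGraph G) x})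
        = (M : Set G) := by
  set U := ⋃ x ∈ (S : Set G),
    {z : G | closedNbhd (enhancedPowerGraph G) z = closedNbhd (enhancedPowerGraph G) x}
  have hS : (enhancedPowerGraph G).IsClique (S : Set G) := fun x hx y hy ↦ hadj x hx y hy
  have hU : (enhancedPowerGraph G).IsClique U := hS.iUnion_closedNbhd_eq
  have hSU : (S : Set G) ⊆ U := fun x hx ↦ Set.mem_biUnion hx rfl
  obtain ⟨M, hM, hUM⟩ := exists_isMaxCyclic_le <|
    isCyclic_closure_of_forall_isCyclic_closure_pair fun _ hx _ hy ↦
      isCyclic_closure_pair_of_isClique hU hx hy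
  refine ⟨M, hM, subset_closure.trans hUM |>.antisymm fun m hm ↦ ?_⟩
  by_contra hmU
  have hMcyc : IsCyclic M := hM.1
  refine hmax ⟨m, fun x hx hmx ↦ hmU (Set.mem_biUnion hx hmx), fun x hx ↦ ?_⟩
  exact enhancedPowerGraph_adj_of_mem hm (hUM (subset_closure (hSU hx)))
    (by rintro rfl; exact hmU (hSU hx))

/-- Lemma 4.3: if `{x_1, …, x_t}` is a maximal clique of the reduced graph
`ℛ_{𝒫_E(G)}`, then the union of the `≡`-classes of the `x_i` is a maximal cyclic
subgroup of `G`. -/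
theorem union_equivClasses_maximal_reduced_clique (G : Type*) [Group G] [Fintype G]
    (S : Finset G)
    (hadj : ∀ x ∈ S, ∀ y ∈ S, x ≠ y → (enhancedPowerGraph G).Adj x y)
    (hcls : ∀ x ∈ S, ∀ y ∈ S, x ≠ y →
      closedNbhd (enhancedPowerGraph G) x ≠ closedNbhd (enhancedPowerGraph G) y)
    (hmax : ¬∃ z : G,
      (∀ x ∈ S, closedNbhd (enhancedPowerGraph G) z ≠ closedNbhd (enhancedPowerGraph G) x) ∧
      ∀ x ∈ S, (enhancedPowerGraph G).Adj z x) :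
    ∃ M : Subgroup G, IsMaxCyclic M ∧
      (⋃ x ∈ (S : Set G),
        {z : G | closedNbhd (enhancedPowerGraph G) z = closedNbhd (enhancedPowerGraph G) x})
        = (M : Set G) :=
  union_equivClasses_maximal_reduced_clique_general G S hadj hmax
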